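/- arXiv:1503.07414 — 2 statements merged into one kernel-verified Lean document; each statement's English description precedes it below -/
import Mathlib

section
/- In a metric graph G with basepoint b, any local maximum v of the geodesic distance function f_b(x) = d_G(b, x) that is not a degree-1 graph node admits at least two shortest paths from b to v that are disjoint within some small neighborhood of v (one through each local branch at v). -/
/-!
Fix a separation `u ∪ w` of a small punctured ball `B` around `v`. Each side accumulates at `v`:
a geodesic from `v` to a point of `B ∩ w` stays in `B`, hence in `w`. Take points `xₙ ∈ B ∩ w`
converging to `v` and geodesics `γₙ` from `b` to `xₙ`. Since `v` is a local maximum,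
`d(b, xₙ) ≤ d(b, v)`, so the final stretch of `γₙ` of length almost `ε` stays in `B`, hence in `w`.
By compactness of `G^ℝ` the clamped paths `t ↦ γₙ (min t d(b, xₙ))` have a pointwise cluster
point, which is a geodesic from `b` to `v` whose tail avoids `u`. Doing this for both sides gives
two geodesics whose tails lie in different sides.
-/

open Set Metric Filter Topology

def IsGeodesicPath {G : Type*} [PseudoMetricSpace G] (γ : ℝ → G) (x y : G) (ℓ : ℝ) : Prop :=
  γ 0 = x ∧ γ ℓ = y ∧ ∀ s ∈ Icc 0 ℓ, ∀ t ∈ Icc 0 ℓ, dist (γ s) (γ t) = |s - t|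

namespace IsGeodesicPath

variable {G : Type*} [PseudoMetricSpace G] {γ : ℝ → G} {x y : G} {ℓ s : ℝ}

theorem source (h : IsGeodesicPath γ x y ℓ) : γ 0 = x := h.1

theorem target (h : IsGeodesicPath γ x y ℓ) : γ ℓ = y := h.2.1

theorem dist_eq (h : IsGeodesicPath γ x y ℓ) {t : ℝ} (hs : s ∈ Icc 0 ℓ) (ht : t ∈ Icc 0 ℓ) :
    dist (γ s) (γ t) = |s - t| :=
  h.2.2 s hs t ht

theorem continuousOn (h : IsGeodesicPath γ x y ℓ) : ContinuousOn γ (Icc 0 ℓ) :=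
  LipschitzOnWith.continuousOn (K := 1) <| LipschitzOnWith.of_dist_le_mul fun s hs t ht => by
    rw [h.dist_eq hs ht, Real.dist_eq, NNReal.coe_one, one_mul]

theorem isPreconnected_image_Icc (h : IsGeodesicPath γ x y ℓ) {a c : ℝ} (ha : 0 ≤ a)
    (hc : c ≤ ℓ) : IsPreconnected (γ '' Icc a c) :=
  isPreconnected_Icc.image γ (h.continuousOn.mono (Icc_subset_Icc ha hc))

theorem dist_left (h : IsGeodesicPath γ x y ℓ) (hs : s ∈ Icc 0 ℓ) : dist x (γ s) = s := by
  rw [← h.source, h.dist_eq ⟨le_rfl, hs.1.trans hs.2⟩ hs, zero_sub, abs_neg, abs_of_nonneg hs.1]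

theorem dist_right (h : IsGeodesicPath γ x y ℓ) (hs : s ∈ Icc 0 ℓ) : dist (γ s) y = ℓ - s := by
  rw [← h.target, h.dist_eq hs ⟨hs.1.trans hs.2, le_rfl⟩, abs_sub_comm,
    abs_of_nonneg (sub_nonneg.2 hs.2)]

theorem mem_ball_diff (h : IsGeodesicPath γ x y ℓ) {ε : ℝ} (hεℓ : ε ≤ ℓ)
    (hs : s ∈ Ioo (ℓ - ε) ℓ) : γ s ∈ ball y ε \ {y} := by
  have hd := h.dist_right ⟨by linarith [hs.1], hs.2.le⟩
  refine ⟨mem_ball.2 (by linarith [hs.1]), fun hy => ?_⟩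
  rw [mem_singleton_iff.1 hy, dist_self] at hd
  linarith [hs.2]

theorem image_Icc_subset_ball_diff {b v : G} {ε t : ℝ}
    (h : IsGeodesicPath γ b x (dist b x)) (hxv : x ≠ v) (hxD : dist b x ≤ dist b v)
    (ht : 0 ≤ t) (htε : dist b v - t + dist x v < ε) :
    γ '' Icc t (dist b x) ⊆ ball v ε \ {v} := by
  rintro _ ⟨s, hs, rfl⟩
  have hs' : s ∈ Icc 0 (dist b x) := ⟨ht.trans hs.1, hs.2⟩
  refine ⟨mem_ball.2 ?_, fun hv => ?_⟩
  · calc dist (γ s) v ≤ dist (γ s) x + dist x v := dist_triangle _ _ _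
      _ = dist b x - s + dist x v := by rw [h.dist_right hs']
      _ < ε := by linarith [hs.1]
  · have hsb : dist b v = s := by rw [← mem_singleton_iff.1 hv, h.dist_left hs']
    have hsx : s = dist b x := le_antisymm hs.2 (hsb ▸ hxD)
    exact hxv (by rw [← h.target, ← hsx, mem_singleton_iff.1 hv])

end IsGeodesicPath

theorem MapClusterPt.apply_eq_of_tendsto {X Y ι : Type*} [TopologicalSpace X]
    [TopologicalSpace Y] [T2Space Y] {l : Filter ι} {u : ι → X} {x : X} {f : X → Y} {y : Y}
    (hx : MapClusterPt x l u) (hf : ContinuousAt f x) (hy : Tendsto (f ∘ u) l (𝓝 y)) :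
    f x = y := by
  by_contra hne
  exact (ClusterPt.mono (hx.continuousAt_comp hf) hy).ne (disjoint_nhds_nhds.2 hne).eq_bot

theorem IsPreconnected.subset_of_separation {X : Type*} [TopologicalSpace X]
    {s B u w : Set X} (hs : IsPreconnected s) (hsB : s ⊆ B) (hu : IsOpen u) (hw : IsOpen w)
    (hB : B ⊆ u ∪ w) (hsep : B ∩ (u ∩ w) = ∅) (hsw : (s ∩ w).Nonempty) : s ⊆ w := by
  have hs_sep : s ∩ (u ∩ w) = ∅ := subset_empty_iff.1 (hsep ▸ inter_subset_inter_left _ hsB)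
  refine (isPreconnected_iff_subset_of_disjoint.1 hs u w hu hw (hsB.trans hB) hs_sep).resolve_left
    fun hsu => ?_
  obtain ⟨p, hps, hpw⟩ := hsw
  exact (hs_sep ▸ ⟨hps, hsu hps, hpw⟩ : p ∈ (∅ : Set X))

section GeodesicSpace

variable {G : Type*} [MetricSpace G]

theorem mem_closure_of_separation_punctured_ball
    (hgeo : ∀ x y : G, ∃ γ, IsGeodesicPath γ x y (dist x y)) {v : G} {ε : ℝ} {u w : Set G}
    (hu : IsOpen u) (hw : IsOpen w) (hB : ball v ε \ {v} ⊆ u ∪ w)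
    (hsep : (ball v ε \ {v}) ∩ (u ∩ w) = ∅) (hwne : ((ball v ε \ {v}) ∩ w).Nonempty) :
    v ∈ closure ((ball v ε \ {v}) ∩ w) := by
  obtain ⟨x, ⟨hxε, hxv⟩, hxw⟩ := hwne
  obtain ⟨τ, hτ⟩ := hgeo v x
  have hr : 0 < dist v x := dist_pos.2 (Ne.symm hxv)
  have hrε : dist v x < ε := by rw [dist_comm]; exact hxε
  refine Metric.mem_closure_iff.2 fun δ hδ => ?_
  set s := min (δ / 2) (dist v x)
  have hs : s ∈ Icc 0 (dist v x) := ⟨by positivity, min_le_right _ _⟩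
  have hτs : dist v (τ s) = s := hτ.dist_left hs
  have hτB : τ '' Icc s (dist v x) ⊆ ball v ε \ {v} := by
    rintro _ ⟨r, hr', rfl⟩
    have hτr := hτ.dist_left ⟨hs.1.trans hr'.1, hr'.2⟩
    refine ⟨mem_ball'.2 (by linarith [hr'.2]), fun hv => ?_⟩
    rw [← mem_singleton_iff.1 hv, dist_self] at hτr
    linarith [hr'.1, lt_min (half_pos hδ) hr]
  have hτw : τ '' Icc s (dist v x) ⊆ w :=
    (hτ.isPreconnected_image_Icc hs.1 le_rfl).subset_of_separation hτB hu hw hB hsep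
      ⟨x, ⟨dist v x, ⟨hs.2, le_rfl⟩, hτ.target⟩, hxw⟩
  have hmem : τ s ∈ τ '' Icc s (dist v x) := mem_image_of_mem τ ⟨le_rfl, hs.2⟩
  exact ⟨τ s, ⟨hτB hmem, hτw hmem⟩, by linarith [min_le_left (δ / 2) (dist v x)]⟩

theorem exists_isGeodesicPath_mapClusterPt [CompactSpace G] {ι : Type*} {l : Filter ι} [l.NeBot]
    {b v : G} {x : ι → G} {γ : ι → ℝ → G}
    (hγ : ∀ i, IsGeodesicPath (γ i) b (x i) (dist b (x i))) (hx : Tendsto x l (𝓝 v)) :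
    ∃ σ, IsGeodesicPath σ b v (dist b v) ∧
      MapClusterPt σ l fun i t => γ i (min t (dist b (x i))) := by
  set Φ : ι → ℝ → G := fun i t => γ i (min t (dist b (x i)))
  have hL : Tendsto (fun i => dist b (x i)) l (𝓝 (dist b v)) := tendsto_const_nhds.dist hx
  have hclamp : ∀ i, ∀ t, 0 ≤ t → min t (dist b (x i)) ∈ Icc 0 (dist b (x i)) :=
    fun i t ht => ⟨le_min ht dist_nonneg, min_le_right _ _⟩
  obtain ⟨σ, -, hσ⟩ := isCompact_univ.exists_mapClusterPt (f := l) (u := Φ) (by simp)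
  refine ⟨σ, ⟨hσ.apply_eq_of_tendsto (continuous_apply 0).continuousAt ?_,
    hσ.apply_eq_of_tendsto (continuous_apply (dist b v)).continuousAt ?_, ?_⟩, hσ⟩
  · refine tendsto_const_nhds.congr fun i => ?_
    simp only [Function.comp_apply, Φ, min_eq_left (dist_nonneg : 0 ≤ dist b (x i)), (hγ i).source]
  · refine hx.congr_dist ?_
    have hdist : ∀ i, dist (x i) (Φ i (dist b v)) = |dist b (x i) - min (dist b v) (dist b (x i))| :=
      fun i => by
        rw [← (hγ i).dist_eq ⟨dist_nonneg, le_rfl⟩ (hclamp i _ dist_nonneg), (hγ i).target]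
    simp only [Function.comp_apply, hdist]
    simpa using (hL.sub ((tendsto_const_nhds (x := dist b v)).min hL)).abs
  · intro s hs t ht
    refine hσ.apply_eq_of_tendsto (f := fun φ : ℝ → G => dist (φ s) (φ t))
      ((continuous_apply s).dist (continuous_apply t)).continuousAt ?_
    have hdist : ∀ i, dist (Φ i s) (Φ i t) = |min s (dist b (x i)) - min t (dist b (x i))| :=
      fun i => (hγ i).dist_eq (hclamp i s hs.1) (hclamp i t ht.1)
    have hlim := ((tendsto_const_nhds (x := s)).min hL).sub ((tendsto_const_nhds (x := t)).min hL)
    rw [min_eq_left hs.2, min_eq_left ht.2] at hlim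
    exact hlim.abs.congr fun i => (hdist i).symm

theorem exists_isGeodesicPath_tail_mem_of_separation [CompactSpace G]
    (hgeo : ∀ x y : G, ∃ γ, IsGeodesicPath γ x y (dist x y)) {b v : G} {ε : ℝ}
    (hεD : ε ≤ dist b v) (hmax : ∀ x ∈ ball v ε, dist b x ≤ dist b v) {u w : Set G}
    (hu : IsOpen u) (hw : IsOpen w) (hB : ball v ε \ {v} ⊆ u ∪ w)
    (hsep : (ball v ε \ {v}) ∩ (u ∩ w) = ∅) (hwne : ((ball v ε \ {v}) ∩ w).Nonempty) :
    ∃ σ, IsGeodesicPath σ b v (dist b v) ∧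
      ∀ t ∈ Ioo (dist b v - ε) (dist b v), σ t ∈ w ∧ σ t ∉ u := by
  obtain ⟨x, hxBw, hxv⟩ :=
    mem_closure_iff_seq_limit.1 (mem_closure_of_separation_punctured_ball hgeo hu hw hB hsep hwne)
  choose γ hγ using fun n => hgeo b (x n)
  obtain ⟨σ, hσ, hσΦ⟩ := exists_isGeodesicPath_mapClusterPt hγ hxv
  refine ⟨σ, hσ, fun t ht => ?_⟩
  have ht0 : 0 ≤ t := by linarith [ht.1]
  have hxD : ∀ n, dist b (x n) ≤ dist b v := fun n => hmax _ (hxBw n).1.1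
  have hclose : ∀ᶠ n in atTop, dist (x n) v < min (dist b v - t) (ε - (dist b v - t)) :=
    (tendsto_iff_dist_tendsto_zero.1 hxv).eventually_lt_const
      (lt_min (by linarith [ht.2]) (by linarith [ht.1]))
  have hΦu : ∀ᶠ n in atTop, γ n (min t (dist b (x n))) ∈ uᶜ := by
    filter_upwards [hclose] with n hn
    have hlt : t < dist b (x n) := by
      linarith [dist_triangle b (x n) v, min_le_left (dist b v - t) (ε - (dist b v - t))]
    have hsub := (hγ n).image_Icc_subset_ball_diff (ε := ε) (hxBw n).1.2 (hxD n) ht0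
      (by linarith [min_le_right (dist b v - t) (ε - (dist b v - t))])
    have hsubw := ((hγ n).isPreconnected_image_Icc ht0 le_rfl).subset_of_separation hsub hu hw hB
      hsep ⟨x n, ⟨_, ⟨hlt.le, le_rfl⟩, (hγ n).target⟩, (hxBw n).2⟩
    have hmem : γ n t ∈ γ n '' Icc t (dist b (x n)) := mem_image_of_mem _ ⟨le_rfl, hlt.le⟩
    rw [min_eq_left hlt.le]
    exact fun hmu => (hsep ▸ ⟨hsub hmem, hmu, hsubw hmem⟩ : γ n t ∈ (∅ : Set G))
  have hσu : σ t ∉ u :=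
    hu.isClosed_compl.mem_of_mapClusterPt
      (hσΦ.continuousAt_comp (f := fun φ : ℝ → G => φ t) (continuous_apply t).continuousAt) hΦu
  exact ⟨(hB (hσ.mem_ball_diff hεD ht)).resolve_left hσu, hσu⟩

end GeodesicSpace

/-- In a metric graph `G` (a compact geodesic metric space) with basepoint
`b`, any local maximum `v ≠ b` of the geodesic distance function
`f_b(x) = d_G(b, x)` that is not a degree-1 node — i.e. near which the
punctured neighborhoods are disconnected into at least two branches —
admits at least two shortest paths (unit-speed geodesics) from `b` to `v`
that are disjoint within a small punctured neighborhood of `v`. -/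
theorem local_max_two_disjoint_shortest_paths
    {G : Type*} [MetricSpace G] [CompactSpace G]
    (hgeo : ∀ x y : G, ∃ γ : ℝ → G, γ 0 = x ∧ γ (dist x y) = y ∧
      ∀ s ∈ Icc 0 (dist x y), ∀ t ∈ Icc 0 (dist x y), dist (γ s) (γ t) = |s - t|)
    (b v : G) (hbv : b ≠ v)
    -- `v` is a local maximum of `f_b = d_G(b, ·)`:
    (hmax : ∃ ε > 0, ∀ x : G, dist x v < ε → dist b x ≤ dist b v)
    -- `v` is not a degree-1 node: small punctured balls around `v` are
    -- disconnected (there are at least two local branches at `v`):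
    (hbranch : ∃ ε0 > 0, ∀ ε, 0 < ε → ε < ε0 →
      ¬ IsPreconnected (ball v ε \ {v})) :
    ∃ γ1 γ2 : ℝ → G,
      (γ1 0 = b ∧ γ1 (dist b v) = v ∧
        ∀ s ∈ Icc 0 (dist b v), ∀ t ∈ Icc 0 (dist b v),
          dist (γ1 s) (γ1 t) = |s - t|) ∧
      (γ2 0 = b ∧ γ2 (dist b v) = v ∧
        ∀ s ∈ Icc 0 (dist b v), ∀ t ∈ Icc 0 (dist b v),
          dist (γ2 s) (γ2 t) = |s - t|) ∧
      ∃ ε > 0, ∀ s ∈ Ioo (dist b v - ε) (dist b v),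
        ∀ t ∈ Ioo (dist b v - ε) (dist b v), γ1 s ≠ γ2 t := by
  obtain ⟨εm, hεm, hloc⟩ := hmax
  obtain ⟨ε0, hε0, hdisc⟩ := hbranch
  set ε := min (min εm (ε0 / 2)) (dist b v)
  have hε : 0 < ε := lt_min (lt_min hεm (half_pos hε0)) (dist_pos.2 hbv)
  have hεm' : ε ≤ εm := (min_le_left _ _).trans (min_le_left _ _)
  have hε0' : ε < ε0 := ((min_le_left _ _).trans (min_le_right _ _)).trans_lt (half_lt_self hε0)
  have hmax' : ∀ x ∈ ball v ε, dist b x ≤ dist b v := fun x hx => hloc x (hx.trans_le hεm')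
  have hsep := hdisc ε hε hε0'
  simp only [IsPreconnected, not_forall, not_nonempty_iff_eq_empty] at hsep
  obtain ⟨u, w, hu, hw, hB, hBu, hBw, huw⟩ := hsep
  obtain ⟨σ1, hσ1, hσ1w⟩ := exists_isGeodesicPath_tail_mem_of_separation hgeo (min_le_right _ _)
    hmax' hw hu (union_comm u w ▸ hB) (inter_comm u w ▸ huw) hBu
  obtain ⟨σ2, hσ2, hσ2u⟩ :=
    exists_isGeodesicPath_tail_mem_of_separation hgeo (min_le_right _ _) hmax' hu hw hB huw hBw
  exact ⟨σ1, σ2, hσ1, hσ2, ε, hε, fun s hs t ht hst => (hσ1w s hs).2 (hst ▸ (hσ2u t ht).1)⟩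
end

section
/- Let P and Q be finite point sets in ℝ² and let P', Q' be the orthogonal (L∞-nearest-point) projections of P and Q onto the diagonal L = {(x,x)}. Then the bottleneck distance between the persistence diagrams P and Q (allowing matchings to the diagonal) equals the point-set bottleneck distance (perfect-matching bottleneck distance under L∞ norm) between P ∪ Q' and Q ∪ P': d_B(P, Q) = d̂_B(P ∪ Q', Q ∪ P'). -/
open Finset

/-- `L∞` distance between two points of the plane. -/
noncomputable def linfDist (p q : ℝ × ℝ) : ℝ := max |p.1 - q.1| |p.2 - q.2|

/-- Nearest-point (`L∞`) projection of a point onto the diagonal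
`L = {(x, x)}`. -/
noncomputable def diagProj (p : ℝ × ℝ) : ℝ × ℝ := ((p.1 + p.2) / 2, (p.1 + p.2) / 2)

/-- `L∞` distance of a point to the diagonal. -/
noncomputable def distToDiag (p : ℝ × ℝ) : ℝ := |p.2 - p.1| / 2

/-- A partial matching between two persistence diagrams given as indexed
families (`Fin k` and `Fin l`, so multiplicities are respected): a set of
matched index pairs, each index used at most once on each side; unmatched
points are matched to the diagonal. -/
structure IndexedPartialMatching (k l : ℕ) where
  M : Finset (Fin k × Fin l)
  injL : ∀ a ∈ M, ∀ b ∈ M, a.1 = b.1 → a = b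
  injR : ∀ a ∈ M, ∀ b ∈ M, a.2 = b.2 → a = b

/-- The cost of a partial matching between diagrams `p : Fin k → ℝ²` and
`q : Fin l → ℝ²`. -/
noncomputable def pmCost {k l : ℕ} (p : Fin k → ℝ × ℝ) (q : Fin l → ℝ × ℝ)
    (C : IndexedPartialMatching k l) : ℝ :=
  sSup ({r | ∃ ij ∈ C.M, r = linfDist (p ij.1) (q ij.2)} ∪
        {r | ∃ i, (∀ j, (i, j) ∉ C.M) ∧ r = distToDiag (p i)} ∪
        {r | ∃ j, (∀ i, (i, j) ∉ C.M) ∧ r = distToDiag (q j)})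

/-- Persistence-diagram bottleneck distance (matchings to the diagonal
allowed). -/
noncomputable def dB {k l : ℕ} (p : Fin k → ℝ × ℝ) (q : Fin l → ℝ × ℝ) : ℝ :=
  sInf {r | ∃ C : IndexedPartialMatching k l, r = pmCost p q C}

/-- Point-set (perfect-matching) bottleneck distance between two families of
points indexed by the same finite type. -/
noncomputable def dHatB {ι : Type*} [Fintype ι] (A B : ι → ℝ × ℝ) : ℝ :=
  sInf {r | ∃ σ : Equiv.Perm ι, r = sSup {d | ∃ i, d = linfDist (A i) (B (σ i))}}

/-!
A partial matching `C` of `P` and `Q` becomes a permutation of `P ∪ Q'` onto `Q ∪ P'`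
(indexed by `Fin k ⊕ Fin l`): a matched pair `(i, j)` sends `p i ↦ q j` and `q' j ↦ p' i`,
an unmatched `p i` goes to its own projection `p' i`, and an unmatched `q' j` to `q j`.
The extra edges `q' j ↦ p' i` cost no more than `‖p i - q j‖∞` since the projection is
1-Lipschitz, so the permutation costs at most what `C` does. Conversely a permutation `σ`
yields the matching of the pairs with `σ (inl i) = inr j`; a point `p i` that `σ` sends to
some diagonal point `p' i'` is at least `distToDiag (p i)` away from it, because `p' i` is the
nearest diagonal point, and symmetrically for `q j`. Hence the two infima coincide.
-/

lemma linfDist_eq_dist (a b : ℝ × ℝ) : linfDist a b = dist a b := by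
  simp [linfDist, Prod.dist_eq, Real.dist_eq]

lemma linfDist_nonneg (a b : ℝ × ℝ) : 0 ≤ linfDist a b :=
  linfDist_eq_dist a b ▸ dist_nonneg

lemma linfDist_comm (a b : ℝ × ℝ) : linfDist a b = linfDist b a := by
  simp only [linfDist_eq_dist, dist_comm]

lemma distToDiag_nonneg (a : ℝ × ℝ) : 0 ≤ distToDiag a := by
  unfold distToDiag; positivity

lemma linfDist_diagProj_self (a : ℝ × ℝ) : linfDist a (diagProj a) = distToDiag a := by
  have h₁ : a.1 - (a.1 + a.2) / 2 = -((a.2 - a.1) / 2) := by ring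
  have h₂ : a.2 - (a.1 + a.2) / 2 = (a.2 - a.1) / 2 := by ring
  simp only [linfDist, diagProj, distToDiag, h₁, h₂, abs_neg, max_self, abs_div, abs_two]

lemma distToDiag_le_linfDist_diagProj (a b : ℝ × ℝ) : distToDiag a ≤ linfDist a (diagProj b) := by
  set m := (b.1 + b.2) / 2
  have : |a.2 - a.1| ≤ |a.2 - m| + |m - a.1| := abs_sub_le _ _ _
  have : |m - a.1| = |a.1 - m| := abs_sub_comm _ _
  have : |a.1 - m| ≤ max |a.1 - m| |a.2 - m| := le_max_left _ _
  have : |a.2 - m| ≤ max |a.1 - m| |a.2 - m| := le_max_right _ _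
  simp only [distToDiag, linfDist, diagProj]
  linarith

lemma linfDist_diagProj_le (a b : ℝ × ℝ) :
    linfDist (diagProj a) (diagProj b) ≤ linfDist a b := by
  have hsplit : (a.1 + a.2) / 2 - (b.1 + b.2) / 2 = ((a.1 - b.1) + (a.2 - b.2)) / 2 := by ring
  have : |(a.1 - b.1) + (a.2 - b.2)| ≤ |a.1 - b.1| + |a.2 - b.2| := abs_add_le _ _
  have : |a.1 - b.1| ≤ max |a.1 - b.1| |a.2 - b.2| := le_max_left _ _
  have : |a.2 - b.2| ≤ max |a.1 - b.1| |a.2 - b.2| := le_max_right _ _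
  simp only [linfDist, diagProj, max_self, hsplit, abs_div, abs_two]
  linarith

lemma sInf_le_sInf_of_forall_exists_le {α β : Type*} [Nonempty α] {f : α → ℝ} {g : β → ℝ}
    (hg : BddBelow {r | ∃ b, r = g b}) (h : ∀ a, ∃ b, g b ≤ f a) :
    sInf {r | ∃ b, r = g b} ≤ sInf {r | ∃ a, r = f a} := by
  refine le_csInf ⟨_, Classical.arbitrary α, rfl⟩ ?_
  rintro _ ⟨a, rfl⟩
  obtain ⟨b, hb⟩ := h a
  exact (csInf_le hg ⟨b, rfl⟩).trans hb

section PermCost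

variable {ι : Type*} (A B : ι → ℝ × ℝ) (σ : Equiv.Perm ι)

noncomputable def permCost : ℝ := sSup {d | ∃ i, d = linfDist (A i) (B (σ i))}

lemma permCost_nonneg : 0 ≤ permCost A B σ :=
  Real.sSup_nonneg <| by rintro _ ⟨i, rfl⟩; exact linfDist_nonneg _ _

lemma linfDist_le_permCost [Finite ι] (i : ι) : linfDist (A i) (B (σ i)) ≤ permCost A B σ :=
  le_csSup ((Set.finite_range fun i => linfDist (A i) (B (σ i))).bddAbove.mono
    (by rintro _ ⟨i, rfl⟩; exact ⟨i, rfl⟩)) ⟨i, rfl⟩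

lemma permCost_le {c : ℝ} (hc : 0 ≤ c) (h : ∀ i, linfDist (A i) (B (σ i)) ≤ c) :
    permCost A B σ ≤ c :=
  Real.sSup_le (by rintro _ ⟨i, rfl⟩; exact h i) hc

end PermCost

instance (k l : ℕ) : Nonempty (IndexedPartialMatching k l) :=
  ⟨⟨∅, by simp, by simp⟩⟩

section PartialMatchingCost

variable {k l : ℕ} (p : Fin k → ℝ × ℝ) (q : Fin l → ℝ × ℝ) (C : IndexedPartialMatching k l)

lemma pmCost_nonneg : 0 ≤ pmCost p q C := by
  apply Real.sSup_nonneg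
  rintro _ ((⟨ij, -, rfl⟩ | ⟨i, -, rfl⟩) | ⟨j, -, rfl⟩)
  · exact linfDist_nonneg _ _
  all_goals exact distToDiag_nonneg _

lemma bddAbove_pmCost_set :
    BddAbove ({r | ∃ ij ∈ C.M, r = linfDist (p ij.1) (q ij.2)} ∪
        {r | ∃ i, (∀ j, (i, j) ∉ C.M) ∧ r = distToDiag (p i)} ∪
        {r | ∃ j, (∀ i, (i, j) ∉ C.M) ∧ r = distToDiag (q j)}) := by
  refine (((Set.finite_range fun ij : Fin k × Fin l => linfDist (p ij.1) (q ij.2)).union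
      (Set.finite_range fun i => distToDiag (p i))).union
      (Set.finite_range fun j => distToDiag (q j))).bddAbove.mono ?_
  rintro _ ((⟨ij, -, rfl⟩ | ⟨i, -, rfl⟩) | ⟨j, -, rfl⟩)
  · exact Or.inl (Or.inl ⟨ij, rfl⟩)
  · exact Or.inl (Or.inr ⟨i, rfl⟩)
  · exact Or.inr ⟨j, rfl⟩

variable {p q C}

lemma linfDist_le_pmCost {i : Fin k} {j : Fin l} (h : (i, j) ∈ C.M) :
    linfDist (p i) (q j) ≤ pmCost p q C :=
  le_csSup (bddAbove_pmCost_set p q C) (Or.inl (Or.inl ⟨(i, j), h, rfl⟩))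

lemma distToDiag_left_le_pmCost {i : Fin k} (h : ∀ j, (i, j) ∉ C.M) :
    distToDiag (p i) ≤ pmCost p q C :=
  le_csSup (bddAbove_pmCost_set p q C) (Or.inl (Or.inr ⟨i, h, rfl⟩))

lemma distToDiag_right_le_pmCost {j : Fin l} (h : ∀ i, (i, j) ∉ C.M) :
    distToDiag (q j) ≤ pmCost p q C :=
  le_csSup (bddAbove_pmCost_set p q C) (Or.inr ⟨j, h, rfl⟩)

lemma pmCost_le {c : ℝ} (hc : 0 ≤ c)
    (hM : ∀ i j, (i, j) ∈ C.M → linfDist (p i) (q j) ≤ c)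
    (hp : ∀ i, (∀ j, (i, j) ∉ C.M) → distToDiag (p i) ≤ c)
    (hq : ∀ j, (∀ i, (i, j) ∉ C.M) → distToDiag (q j) ≤ c) :
    pmCost p q C ≤ c := by
  refine Real.sSup_le ?_ hc
  rintro _ ((⟨⟨i, j⟩, hij, rfl⟩ | ⟨i, hi, rfl⟩) | ⟨j, hj, rfl⟩)
  exacts [hM i j hij, hp i hi, hq j hj]

end PartialMatchingCost

namespace IndexedPartialMatching

variable {k l : ℕ} (C : IndexedPartialMatching k l)

noncomputable def matchFun : Fin k ⊕ Fin l → Fin k ⊕ Fin l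
  | .inl i => if h : ∃ j, (i, j) ∈ C.M then .inr h.choose else .inl i
  | .inr j => if h : ∃ i, (i, j) ∈ C.M then .inl h.choose else .inr j

variable {C}

lemma matchFun_inl_of_mem {i : Fin k} {j : Fin l} (h : (i, j) ∈ C.M) :
    C.matchFun (.inl i) = .inr j := by
  have hex : ∃ j, (i, j) ∈ C.M := ⟨j, h⟩
  rw [matchFun, dif_pos hex]
  exact congrArg (Sum.inr ∘ Prod.snd) (C.injL _ hex.choose_spec _ h rfl)

lemma matchFun_inr_of_mem {i : Fin k} {j : Fin l} (h : (i, j) ∈ C.M) :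
    C.matchFun (.inr j) = .inl i := by
  have hex : ∃ i, (i, j) ∈ C.M := ⟨i, h⟩
  rw [matchFun, dif_pos hex]
  exact congrArg (Sum.inl ∘ Prod.fst) (C.injR _ hex.choose_spec _ h rfl)

lemma matchFun_inl_of_forall_not_mem {i : Fin k} (h : ∀ j, (i, j) ∉ C.M) :
    C.matchFun (.inl i) = .inl i := by
  rw [matchFun, dif_neg (not_exists.mpr h)]

lemma matchFun_inr_of_forall_not_mem {j : Fin l} (h : ∀ i, (i, j) ∉ C.M) :
    C.matchFun (.inr j) = .inr j := by
  rw [matchFun, dif_neg (not_exists.mpr h)]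

variable (C)

lemma matchFun_involutive : Function.Involutive C.matchFun := by
  rintro (i | j)
  · by_cases h : ∃ j, (i, j) ∈ C.M
    · obtain ⟨j, hj⟩ := h
      rw [matchFun_inl_of_mem hj, matchFun_inr_of_mem hj]
    · replace h := not_exists.mp h
      rw [matchFun_inl_of_forall_not_mem h, matchFun_inl_of_forall_not_mem h]
  · by_cases h : ∃ i, (i, j) ∈ C.M
    · obtain ⟨i, hi⟩ := h
      rw [matchFun_inr_of_mem hi, matchFun_inl_of_mem hi]
    · replace h := not_exists.mp h
      rw [matchFun_inr_of_forall_not_mem h, matchFun_inr_of_forall_not_mem h]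

noncomputable def toPerm : Equiv.Perm (Fin k ⊕ Fin l) :=
  C.matchFun_involutive.toPerm

end IndexedPartialMatching

def Equiv.Perm.toPartialMatching {k l : ℕ} (σ : Equiv.Perm (Fin k ⊕ Fin l)) :
    IndexedPartialMatching k l where
  M := univ.filter fun ij => σ (.inl ij.1) = .inr ij.2
  injL a ha b hb h := by
    simp only [mem_filter, mem_univ, true_and] at ha hb
    rw [h, hb, Sum.inr.injEq] at ha
    exact Prod.ext h ha.symm
  injR a ha b hb h := by
    simp only [mem_filter, mem_univ, true_and] at ha hb
    rw [h, ← hb, σ.apply_eq_iff_eq, Sum.inl.injEq] at ha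
    exact Prod.ext ha h

@[simp]
lemma Equiv.Perm.mem_toPartialMatching {k l : ℕ} {σ : Equiv.Perm (Fin k ⊕ Fin l)}
    {ij : Fin k × Fin l} : ij ∈ σ.toPartialMatching.M ↔ σ (.inl ij.1) = .inr ij.2 := by
  simp [Equiv.Perm.toPartialMatching]

section Augmented

variable {k l : ℕ} (p : Fin k → ℝ × ℝ) (q : Fin l → ℝ × ℝ)

lemma permCost_toPerm_le (C : IndexedPartialMatching k l) :
    permCost (Sum.elim p (fun j => diagProj (q j))) (Sum.elim (fun i => diagProj (p i)) q)
      C.toPerm ≤ pmCost p q C := by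
  refine permCost_le _ _ _ (pmCost_nonneg p q C) ?_
  rintro (i | j) <;> simp only [IndexedPartialMatching.toPerm, Function.Involutive.coe_toPerm]
  · by_cases h : ∃ j, (i, j) ∈ C.M
    · obtain ⟨j, hj⟩ := h
      simpa [IndexedPartialMatching.matchFun_inl_of_mem hj] using linfDist_le_pmCost hj
    · replace h := not_exists.mp h
      simpa [IndexedPartialMatching.matchFun_inl_of_forall_not_mem h, linfDist_diagProj_self]
        using distToDiag_left_le_pmCost h
  · by_cases h : ∃ i, (i, j) ∈ C.M
    · obtain ⟨i, hi⟩ := h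
      simp only [IndexedPartialMatching.matchFun_inr_of_mem hi, Sum.elim_inl, Sum.elim_inr]
      calc linfDist (diagProj (q j)) (diagProj (p i)) ≤ linfDist (q j) (p i) :=
            linfDist_diagProj_le _ _
        _ = linfDist (p i) (q j) := linfDist_comm _ _
        _ ≤ pmCost p q C := linfDist_le_pmCost hi
    · replace h := not_exists.mp h
      simpa [IndexedPartialMatching.matchFun_inr_of_forall_not_mem h, linfDist_comm _ (q j),
        linfDist_diagProj_self] using distToDiag_right_le_pmCost h

lemma pmCost_toPartialMatching_le (σ : Equiv.Perm (Fin k ⊕ Fin l)) :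
    pmCost p q σ.toPartialMatching ≤
      permCost (Sum.elim p (fun j => diagProj (q j))) (Sum.elim (fun i => diagProj (p i)) q) σ := by
  set A := Sum.elim p (fun j => diagProj (q j))
  set B := Sum.elim (fun i => diagProj (p i)) q
  refine pmCost_le (permCost_nonneg A B σ) ?_ ?_ ?_
  · intro i j hij
    rw [Equiv.Perm.mem_toPartialMatching] at hij
    simpa [A, B, hij] using linfDist_le_permCost A B σ (.inl i)
  · intro i hi
    obtain ⟨i', hi'⟩ : ∃ i', σ (.inl i) = .inl i' := by
      rcases hσ : σ (.inl i) with i' | j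
      · exact ⟨i', rfl⟩
      · exact absurd (Equiv.Perm.mem_toPartialMatching.mpr hσ) (hi j)
    calc distToDiag (p i) ≤ linfDist (p i) (diagProj (p i')) :=
          distToDiag_le_linfDist_diagProj _ _
      _ ≤ permCost A B σ := by simpa [A, B, hi'] using linfDist_le_permCost A B σ (.inl i)
  · intro j hj
    obtain ⟨j', hj'⟩ : ∃ j', σ (.inr j') = .inr j := by
      rcases hσ : σ.symm (.inr j) with i | j'
      · exact absurd (Equiv.Perm.mem_toPartialMatching.mpr (σ.symm_apply_eq.mp hσ).symm) (hj i)
      · exact ⟨j', (σ.symm_apply_eq.mp hσ).symm⟩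
    calc distToDiag (q j) ≤ linfDist (q j) (diagProj (q j')) :=
          distToDiag_le_linfDist_diagProj _ _
      _ = linfDist (diagProj (q j')) (q j) := linfDist_comm _ _
      _ ≤ permCost A B σ := by simpa [A, B, hj'] using linfDist_le_permCost A B σ (.inr j')

end Augmented

/-- The bottleneck distance between persistence diagrams `P` and `Q` equals
the perfect-matching bottleneck distance between the augmented point sets
`P ∪ Q'` and `Q ∪ P'`, where `P'`, `Q'` are the diagonal projections of
`P`, `Q` (multiplicities counted via index sets `Fin k ⊕ Fin l`). -/
theorem dB_eq_dHatB_augmented {k l : ℕ}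
    (p : Fin k → ℝ × ℝ) (q : Fin l → ℝ × ℝ) :
    dB p q =
      dHatB (Sum.elim p (fun j => diagProj (q j)))
            (Sum.elim (fun i => diagProj (p i)) q) := by
  set A := Sum.elim p (fun j => diagProj (q j))
  set B := Sum.elim (fun i => diagProj (p i)) q
  change sInf _ = sInf {r | ∃ σ, r = permCost A B σ}
  apply le_antisymm
  · exact sInf_le_sInf_of_forall_exists_le ⟨0, by rintro _ ⟨C, rfl⟩; exact pmCost_nonneg p q C⟩
      fun σ => ⟨σ.toPartialMatching, pmCost_toPartialMatching_le p q σ⟩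
  · exact sInf_le_sInf_of_forall_exists_le ⟨0, by rintro _ ⟨σ, rfl⟩; exact permCost_nonneg A B σ⟩
      fun C => ⟨C.toPerm, permCost_toPerm_le p q C⟩
end
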